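/- For all ordinals α < ε₀ and x ∈ ℕ, if h : ℕ → ℕ satisfies h(x) > x for all x, then h_α(x) ≤ h^α(x) − x, where h_α is the length hierarchy and h^α the Hardy hierarchy built from h with the same fundamental sequences. -/

import Mathlib

/-- Ordinal terms below ε₀: a term is a list of exponents,
`cons β γ` denoting ω^β + γ. -/
inductive OT : Type
  | nil : OT
  | cons : OT → OT → OT
deriving DecidableEq

namespace OT

/-- The term 1 = ω^0. -/
def one : OT := cons nil nil

/-- Syntactic concatenation (direct sum) of ordinal terms. -/
def add : OT → OT → OT
  | nil, b => b
  | cons e r, b => cons e (add r b)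

/-- A term ω^{β₁}+...+ω^{β_m} is a successor iff m > 0 and β_m = 0. -/
def isSucc : OT → Bool
  | nil => false
  | cons e nil => e == nil
  | cons _ (cons e r) => isSucc (cons e r)

/-- Remove the last summand ω^0 of a successor term. -/
def pred : OT → OT
  | nil => nil
  | cons _ nil => nil
  | cons e (cons e' r) => cons e (pred (cons e' r))

/-- Limit terms. -/
def isLim (a : OT) : Prop := a ≠ nil ∧ isSucc a = false

/-- ω^β · n as an ordinal term. -/
def rep : ℕ → OT → OT
  | 0, _ => nil
  | n + 1, β => cons β (rep n β)

/-- The standard assignment of fundamental sequences (with ω_x = x+1):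
(γ+ω^{β+1})_x = γ+ω^β·(x+1) and (γ+ω^λ)_x = γ+ω^{λ_x}. -/
def fseq : OT → ℕ → OT
  | nil, _ => nil
  | cons β nil, x =>
      if β = nil then nil
      else if isSucc β then rep (x + 1) (pred β)
      else cons (fseq β x) nil
  | cons β (cons e r), x => cons β (fseq (cons e r) x)

/-- Syntactic ordering of terms (on CNF terms this is the ordinal ordering). -/
def lt : OT → OT → Prop
  | _, nil => False
  | nil, cons _ _ => True
  | cons a r, cons b s => lt a b ∨ (a = b ∧ lt r s)

def le (a b : OT) : Prop := lt a b ∨ a = b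

/-- Cantor normal form: exponents weakly decreasing, all in CNF. -/
def isCNF : OT → Prop
  | nil => True
  | cons b nil => isCNF b
  | cons b (cons e r) => isCNF b ∧ le e b ∧ isCNF (cons e r)

/-- Number of occurrences of the exponent β in a term. -/
def count (β : OT) : OT → ℕ
  | nil => 0
  | cons b r => (if b = β then 1 else 0) + count β r

/-- k-lean: every coefficient (at every level) is ≤ k. -/
def leanOrd (k : ℕ) : OT → Prop
  | nil => True
  | cons b r => count b (cons b r) ≤ k ∧ leanOrd k b ∧ leanOrd k r

end OT

/-- Pointwise-at-x ordering: smallest transitive relation with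
α ⊏_x α+1 and λ_x ⊏_x λ. -/
inductive Ptw (x : ℕ) : OT → OT → Prop
  | succ (a : OT) : Ptw x a (OT.add a OT.one)
  | lim (l : OT) : OT.isLim l → Ptw x (OT.fseq l x) l
  | trans {a b c : OT} : Ptw x a b → Ptw x b c → Ptw x a c

/-!
Both hierarchies unfold along the same path: at a limit they pass to `a_x` at the same
argument, at a successor both move from `x` to `h x`. Along a successor step the length
grows by one while the Hardy value's argument grows by `h x - x ≥ 1`, so
`L a x + x ≤ H a x` is preserved by induction on `a`. The induction is well founded because
the ordinal value of a term, CNF or not, drops strictly from `a` to its predecessor and to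
every `a_x`.
-/

open scoped Ordinal

namespace OT

noncomputable def val : OT → Ordinal.{0}
  | nil => 0
  | cons e r => ω ^ val e + val r

lemma val_rep (γ : OT) : ∀ n : ℕ, val (rep n γ) = ω ^ val γ * n
  | 0 => by simp [rep, val]
  | n + 1 => by
    rw [rep, val, val_rep γ n, Nat.add_comm n 1, Nat.cast_add, Nat.cast_one, mul_add, mul_one]

lemma val_eq_val_pred_add_one : ∀ a : OT, isSucc a = true → val a = val (pred a) + 1
  | cons e nil, hs => by
    obtain rfl : e = nil := by simpa [isSucc] using hs
    simp [val, pred]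
  | cons e (cons e' r), hs => by
    have ih := val_eq_val_pred_add_one (cons e' r) (by simpa [isSucc] using hs)
    rw [val] at ih
    rw [pred, val, val, ih, val, add_assoc]

lemma val_pred_lt (a : OT) (hs : isSucc a = true) : val (pred a) < val a := by
  rw [val_eq_val_pred_add_one a hs]
  exact lt_add_one _

lemma val_fseq_lt : ∀ a : OT, isLim a → ∀ x : ℕ, val (fseq a x) < val a
  | cons β nil, ⟨_, hl⟩, x => by
    have hβ : β ≠ nil := by
      rintro rfl
      simp [isSucc] at hl
    by_cases hs : isSucc β = true
    · -- ω^(β-1) · (x+1) < ω^(β-1) · ω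
      simp only [fseq, if_neg hβ, if_pos hs, val_rep, val, add_zero]
      rw [val_eq_val_pred_add_one β hs, Ordinal.opow_add, Ordinal.opow_one]
      exact (mul_lt_mul_iff_right₀ (Ordinal.opow_pos _ Ordinal.omega0_pos)).2
        (Ordinal.natCast_lt_omega0 _)
    · simp only [fseq, if_neg hβ, if_neg hs, val, add_zero]
      exact (Ordinal.opow_lt_opow_iff_right Ordinal.one_lt_omega0).2
        (val_fseq_lt β ⟨hβ, by simpa using hs⟩ x)
  | cons β (cons e r), ⟨_, hl⟩, x => by
    rw [fseq, val, val]
    exact add_lt_add_right (val_fseq_lt (cons e r) ⟨by simp, by simpa [isSucc] using hl⟩ x) _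

theorem nil_or_isSucc_or_isLim (a : OT) : a = nil ∨ isSucc a = true ∨ isLim a := by
  by_cases ha : a = nil
  · exact .inl ha
  · cases hs : isSucc a
    · exact .inr (.inr ⟨ha, hs⟩)
    · exact .inr (.inl rfl)

theorem induction_pred_fseq {P : OT → Prop} (nil : P nil)
    (succ : ∀ a, isSucc a = true → P (pred a) → P a)
    (lim : ∀ a, isLim a → (∀ x, P (fseq a x)) → P a) (a : OT) : P a := by
  rcases nil_or_isSucc_or_isLim a with rfl | hs | hl
  · exact nil
  · exact succ a hs (induction_pred_fseq nil succ lim (pred a))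
  · exact lim a hl fun x => induction_pred_fseq nil succ lim (fseq a x)
termination_by val a
decreasing_by
  · exact val_pred_lt a hs
  · exact val_fseq_lt a hl x

end OT

/-- If h(x) > x for all x, then h_α(x) ≤ h^α(x) − x, where `L` is the length
hierarchy and `H` the Hardy hierarchy built from h (same fundamental
sequences), both characterized by their defining equations. -/
theorem stmt12 (h : ℕ → ℕ) (hh : ∀ x, x < h x)
    (L H : OT → ℕ → ℕ)
    (hL0 : ∀ x, L OT.nil x = 0)
    (hLs : ∀ a x, OT.isSucc a = true → L a x = 1 + L (OT.pred a) (h x))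
    (hLl : ∀ a x, OT.isLim a → L a x = L (OT.fseq a x) x)
    (hH0 : ∀ x, H OT.nil x = x)
    (hHs : ∀ a x, OT.isSucc a = true → H a x = H (OT.pred a) (h x))
    (hHl : ∀ a x, OT.isLim a → H a x = H (OT.fseq a x) x) :
    ∀ (a : OT) (x : ℕ), L a x ≤ H a x - x := by
  have length_add_le_hardy : ∀ a x, L a x + x ≤ H a x := by
    refine OT.induction_pred_fseq ?_ ?_ ?_
    · intro x
      rw [hL0, hH0, zero_add]
    · intro a hs ih x
      rw [hLs a x hs, hHs a x hs]
      have ih_hx := ih (h x)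
      have hx := hh x
      omega
    · intro a hl ih x
      rw [hLl a x hl, hHl a x hl]
      exact ih x x
  exact fun a x => Nat.le_sub_of_add_le (length_add_le_hardy a x)
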